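/- arXiv:1309.7967 — 2 statements merged into one kernel-verified Lean document; each statement's English description precedes it below -/
import Mathlib

section
/- Let x_1, ..., x_k (k ∈ ℕ) be positive real numbers satisfying x_1 + ... + x_k < 1, x_1 ≥ x_2 ≥ ... ≥ x_k, and x_1···x_j ≤ 1 - (x_1 + ... + x_j) for every j ∈ {1, ..., k}. Then x_1 + ... + x_k ≤ 1/s_1 + ... + 1/s_k, with equality if and only if x_i = 1/s_i for every i ∈ {1, ..., k}, where (s_i) is the Sylvester sequence. -/
/-!
The Sylvester reciprocals `y i = 1 / s i` are extremal: `1 - (y 1 + ⋯ + y j) = y 1 ⋯ y j`.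
Let `m ≤ k` minimise `(y 1 ⋯ y j) / (x 1 ⋯ x j)`. Then `y 1 ⋯ y m ≤ x 1 ⋯ x m`, so the hypothesis
on `x` gives `x 1 + ⋯ + x m ≤ y 1 + ⋯ + y m`, while every partial product of `x (m+1), x (m+2), …`
is at most the corresponding one of `y`. For a decreasing sequence, domination of partial products
implies domination of the sum, with equality only for equal sequences: combine
`b log (a / b) ≤ a - b` with Abel summation. If the sums agree, the minimal ratio is `1` and the
same fact applied from the start forces `x = y`.
-/

open Finset Real

theorem mul_sum_range_succ_le_sum_range_succ_mul (b d : ℕ → ℝ) (n : ℕ)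
    (hb : ∀ i < n, b (i + 1) ≤ b i) (hd : ∀ l ≤ n, 0 ≤ ∑ i ∈ range l, d i) :
    b n * ∑ i ∈ range (n + 1), d i ≤ ∑ i ∈ range (n + 1), b i * d i := by
  induction n with
  | zero => simp
  | succ n ih =>
    have hstep : b (n + 1) * ∑ i ∈ range (n + 1), d i ≤ b n * ∑ i ∈ range (n + 1), d i :=
      mul_le_mul_of_nonneg_right (hb n n.lt_succ_self) (hd (n + 1) le_rfl)
    have hprev := ih (fun i hi => hb i (by omega)) (fun l hl => hd l (by omega))
    rw [sum_range_succ _ (n + 1), sum_range_succ _ (n + 1)]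
    linarith

theorem mul_log_div_le_sub {a b : ℝ} (ha : 0 < a) (hb : 0 < b) : b * log (a / b) ≤ a - b := by
  have := log_le_sub_one_of_pos (div_pos ha hb)
  rw [div_sub_one hb.ne'] at this
  rwa [le_div_iff₀' hb] at this

theorem mul_log_div_lt_sub {a b : ℝ} (ha : 0 < a) (hb : 0 < b) (hab : a ≠ b) :
    b * log (a / b) < a - b := by
  have := log_lt_sub_one_of_pos (div_pos ha hb) (by rwa [ne_eq, div_eq_one_iff_eq hb.ne'])
  rw [div_sub_one hb.ne'] at this
  rwa [lt_div_iff₀' hb] at this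

theorem sum_le_sum_of_prod_le_prod (a b : ℕ → ℝ) (n : ℕ) (ha : ∀ i < n, 0 < a i)
    (hb : ∀ i < n, 0 < b i) (hanti : ∀ i, i + 1 < n → b (i + 1) ≤ b i)
    (hprod : ∀ l ≤ n, ∏ i ∈ range l, b i ≤ ∏ i ∈ range l, a i) :
    ∑ i ∈ range n, b i ≤ ∑ i ∈ range n, a i ∧
      (∑ i ∈ range n, b i = ∑ i ∈ range n, a i → ∀ i < n, b i = a i) := by
  set d : ℕ → ℝ := fun i => log (a i / b i)
  have hd : ∀ l ≤ n, 0 ≤ ∑ i ∈ range l, d i := by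
    intro l hl
    have hapos : ∀ i ∈ range l, 0 < a i := fun i hi => ha i (by simp at hi; omega)
    have hbpos : ∀ i ∈ range l, 0 < b i := fun i hi => hb i (by simp at hi; omega)
    rw [← log_prod (fun i hi => (div_pos (hapos i hi) (hbpos i hi)).ne'), prod_div_distrib]
    exact log_nonneg ((one_le_div (prod_pos hbpos)).2 (hprod l hl))
  have habel : 0 ≤ ∑ i ∈ range n, b i * d i := by
    obtain _ | n := n
    · simp
    · exact (mul_nonneg (hb n n.lt_succ_self).le (hd (n + 1) le_rfl)).trans
        (mul_sum_range_succ_le_sum_range_succ_mul b d n (fun i hi => hanti i (by omega))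
          (fun l hl => hd l (by omega)))
  have hterm : ∀ i ∈ range n, b i * d i ≤ a i - b i := fun i hi =>
    mul_log_div_le_sub (ha i (mem_range.1 hi)) (hb i (mem_range.1 hi))
  have hsum : 0 ≤ ∑ i ∈ range n, (a i - b i) := habel.trans (sum_le_sum hterm)
  rw [sum_sub_distrib, sub_nonneg] at hsum
  refine ⟨hsum, fun heq => ?_⟩
  by_contra! hne
  obtain ⟨i, hi, hbai⟩ := hne
  have hlt : ∑ i ∈ range n, b i * d i < ∑ i ∈ range n, (a i - b i) :=
    sum_lt_sum hterm ⟨i, mem_range.2 hi, mul_log_div_lt_sub (ha i hi) (hb i hi) (Ne.symm hbai)⟩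
  rw [sum_sub_distrib, heq, sub_self] at hlt
  exact hlt.not_ge habel

theorem sum_le_sum_of_prod_le_one_sub_sum (x y : ℕ → ℝ) (k : ℕ) (hx : ∀ i < k, 0 < x i)
    (hy : ∀ i < k, 0 < y i) (hanti : ∀ i, i + 1 < k → x (i + 1) ≤ x i)
    (hxc : ∀ j ≤ k, ∏ i ∈ range j, x i ≤ 1 - ∑ i ∈ range j, x i)
    (hyc : ∀ j ≤ k, 1 - ∑ i ∈ range j, y i ≤ ∏ i ∈ range j, y i) :
    ∑ i ∈ range k, x i ≤ ∑ i ∈ range k, y i ∧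
      (∑ i ∈ range k, x i = ∑ i ∈ range k, y i → ∀ i < k, x i = y i) := by
  have hprod_pos : ∀ z : ℕ → ℝ, (∀ i < k, 0 < z i) → ∀ j ≤ k, 0 < ∏ i ∈ range j, z i :=
    fun z hz j hj => prod_pos fun i hi => hz i (by simp at hi; omega)
  set ratio : ℕ → ℝ := fun j => (∏ i ∈ range j, y i) / ∏ i ∈ range j, x i
  have one_le_ratio : ∀ j ≤ k, 1 ≤ ratio j ↔ ∏ i ∈ range j, x i ≤ ∏ i ∈ range j, y i :=
    fun j hj => one_le_div (hprod_pos x hx j hj)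
  obtain ⟨m, hm, hmin⟩ := exists_min_image (range (k + 1)) ratio ⟨0, by simp⟩
  have hmin' : ∀ j ≤ k, ratio m ≤ ratio j := fun j hj => hmin j (by simp; omega)
  obtain ⟨n, rfl⟩ : ∃ n, k = m + n := ⟨k - m, by simp at hm; omega⟩
  have hhead : ∑ i ∈ range m, x i ≤ ∑ i ∈ range m, y i := by
    have : ratio m ≤ 1 := by simpa [ratio] using hmin' 0 (by omega)
    rw [div_le_one (hprod_pos x hx m (by omega))] at this
    linarith [hxc m (by omega), hyc m (by omega)]
  have htail_prod : ∀ l ≤ n, ∏ i ∈ range l, x (m + i) ≤ ∏ i ∈ range l, y (m + i) := by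
    intro l hl
    have h := hmin' (m + l) (by omega)
    simp only [ratio, prod_range_add, mul_div_mul_comm] at h
    rwa [le_mul_iff_one_le_right (div_pos (hprod_pos y hy m (by omega))
      (hprod_pos x hx m (by omega))),
      one_le_div (prod_pos fun i hi => hx _ (by simp at hi; omega))] at h
  have htail := sum_le_sum_of_prod_le_prod (fun i => y (m + i)) (fun i => x (m + i)) n
    (fun i hi => hy _ (by omega)) (fun i hi => hx _ (by omega))
    (fun i hi => by simpa [add_assoc] using hanti (m + i) (by omega)) htail_prod
  rw [sum_range_add, sum_range_add]
  refine ⟨add_le_add hhead htail.1, fun heq => ?_⟩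
  have hPY : ∏ i ∈ range m, x i ≤ ∏ i ∈ range m, y i := by
    linarith [htail.1, hxc m (by omega), hyc m (by omega)]
  refine (sum_le_sum_of_prod_le_prod y x (m + n) hy hx hanti fun l hl => ?_).2
    (by rw [sum_range_add, sum_range_add, heq])
  exact (one_le_ratio l hl).1 (((one_le_ratio m (by omega)).2 hPY).trans (hmin' l hl))

@[to_additive Finset.sum_Icc_one_eq_sum_range]
theorem Finset.prod_Icc_one_eq_prod_range {M : Type*} [CommMonoid M] (f : ℕ → M) (n : ℕ) :
    ∏ i ∈ Icc 1 n, f i = ∏ i ∈ range n, f (i + 1) := by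
  induction n with
  | zero => simp
  | succ n ih => rw [prod_Icc_succ_top (by omega), prod_range_succ, ih]

theorem sylvester_succ (s : ℕ → ℕ) (hs1 : s 1 = 2)
    (hs : ∀ i, 2 ≤ i → s i = (∏ j ∈ Icc 1 (i - 1), s j) + 1) (n : ℕ) :
    s (n + 1) = (∏ i ∈ Icc 1 n, s i) + 1 := by
  rcases n with _ | n
  · simp [hs1]
  · simpa using hs (n + 2) (by omega)

theorem sylvester_pos (s : ℕ → ℕ) (hs1 : s 1 = 2)
    (hs : ∀ i, 2 ≤ i → s i = (∏ j ∈ Icc 1 (i - 1), s j) + 1) (n : ℕ) : 0 < s (n + 1) := by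
  rw [sylvester_succ s hs1 hs n]
  omega

theorem one_sub_sum_inv_sylvester (s : ℕ → ℕ) (hs1 : s 1 = 2)
    (hs : ∀ i, 2 ≤ i → s i = (∏ j ∈ Icc 1 (i - 1), s j) + 1) (n : ℕ) :
    1 - ∑ i ∈ Icc 1 n, 1 / (s i : ℝ) = ∏ i ∈ Icc 1 n, 1 / (s i : ℝ) := by
  induction n with
  | zero => simp
  | succ n ih =>
    have hN : ∏ i ∈ Icc 1 n, (s i : ℝ) ≠ 0 := prod_ne_zero_iff.2 fun i hi => by
      obtain ⟨j, rfl⟩ : ∃ j, i = j + 1 := ⟨i - 1, by simp at hi; omega⟩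
      exact_mod_cast (sylvester_pos s hs1 hs j).ne'
    have hsucc : (s (n + 1) : ℝ) = ∏ i ∈ Icc 1 n, (s i : ℝ) + 1 := by
      rw [sylvester_succ s hs1 hs n]
      push_cast
      rfl
    rw [sum_Icc_succ_top (by omega), prod_Icc_succ_top (by omega), ← sub_sub, ih,
      prod_div_distrib, prod_const_one, hsucc]
    field_simp
    ring

theorem sum_le_sylvester_sum_general (k : ℕ) (x : ℕ → ℝ) (s : ℕ → ℕ) (hs1 : s 1 = 2)
    (hs : ∀ i, 2 ≤ i → s i = (∏ j ∈ Finset.Icc 1 (i - 1), s j) + 1)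
    (hpos : ∀ i, 1 ≤ i → i ≤ k → 0 < x i)
    (hmono : ∀ i, 1 ≤ i → i < k → x (i + 1) ≤ x i)
    (hps : ∀ j, 1 ≤ j → j ≤ k →
      (∏ i ∈ Finset.Icc 1 j, x i) ≤ 1 - ∑ i ∈ Finset.Icc 1 j, x i) :
    (∑ i ∈ Finset.Icc 1 k, x i ≤ ∑ i ∈ Finset.Icc 1 k, 1 / (s i : ℝ)) ∧
    ((∑ i ∈ Finset.Icc 1 k, x i = ∑ i ∈ Finset.Icc 1 k, 1 / (s i : ℝ)) ↔
      ∀ i, 1 ≤ i → i ≤ k → x i = 1 / (s i : ℝ)) := by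
  obtain ⟨hle, heq⟩ := sum_le_sum_of_prod_le_one_sub_sum (fun i => x (i + 1))
    (fun i => 1 / (s (i + 1) : ℝ)) k (fun i hi => hpos _ (by omega) (by omega))
    (fun i _ => by have := sylvester_pos s hs1 hs i; positivity)
    (fun i hi => hmono _ (by omega) (by omega))
    (fun j hj => by
      rcases j with _ | j
      · simp
      · simpa only [prod_Icc_one_eq_prod_range, sum_Icc_one_eq_sum_range]
          using hps (j + 1) (by omega) hj)
    (fun j _ => by
      simpa only [prod_Icc_one_eq_prod_range, sum_Icc_one_eq_sum_range]
        using (one_sub_sum_inv_sylvester s hs1 hs j).le)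
  simp only [sum_Icc_one_eq_sum_range]
  refine ⟨hle, fun h i hi hik => ?_, fun h => sum_congr rfl fun i hi => ?_⟩
  · obtain ⟨j, rfl⟩ : ∃ j, i = j + 1 := ⟨i - 1, by omega⟩
    exact heq h j (by omega)
  · exact h _ (by omega) (by simp at hi; omega)

/-- Let `x 1, …, x k` be positive reals with `x 1 + ⋯ + x k < 1`,
`x 1 ≥ ⋯ ≥ x k`, and `x 1 ⋯ x j ≤ 1 - (x 1 + ⋯ + x j)` for every `j ≤ k`. Then
`x 1 + ⋯ + x k ≤ 1/s 1 + ⋯ + 1/s k`, with equality iff `x i = 1/s i` for all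
`i`, where `s` is the Sylvester sequence. -/
theorem sum_le_sylvester_sum (k : ℕ) (x : ℕ → ℝ) (s : ℕ → ℕ) (hs1 : s 1 = 2)
    (hs : ∀ i, 2 ≤ i → s i = (∏ j ∈ Finset.Icc 1 (i - 1), s j) + 1)
    (hpos : ∀ i, 1 ≤ i → i ≤ k → 0 < x i)
    (hsum : ∑ i ∈ Finset.Icc 1 k, x i < 1)
    (hmono : ∀ i, 1 ≤ i → i < k → x (i + 1) ≤ x i)
    (hps : ∀ j, 1 ≤ j → j ≤ k →
      (∏ i ∈ Finset.Icc 1 j, x i) ≤ 1 - ∑ i ∈ Finset.Icc 1 j, x i) :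
    (∑ i ∈ Finset.Icc 1 k, x i ≤ ∑ i ∈ Finset.Icc 1 k, 1 / (s i : ℝ)) ∧
    ((∑ i ∈ Finset.Icc 1 k, x i = ∑ i ∈ Finset.Icc 1 k, 1 / (s i : ℝ)) ↔
      ∀ i, 1 ≤ i → i ≤ k → x i = 1 / (s i : ℝ)) :=
  sum_le_sylvester_sum_general k x s hs1 hs hpos hmono hps
end

section
/- For d ≥ 2 and k ≥ 0, the simplex S^d_k = conv({0, s_1 e_1, ..., s_{d-1} e_{d-1}, (k+1)(s_d - 1) e_d}) ⊂ ℝ^d contains exactly k integer points in its interior, and its volume is (k+1)(s_d - 1)^2 / d!. -/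
open MeasureTheory Set

/-!
Write `P = s 1 ⋯ s (d - 1) = s d - 1`. The simplex is `{x ≥ 0 | ∑ i, x i / a i ≤ 1}` with
semi-axes `a i = s (i + 1)` for `i < d - 1` and `a (d - 1) = (k + 1) P`, so its volume is
`∏ i, a i / d!`, by a diagonal change of variables from the standard simplex, whose volume is found
by slicing. An interior lattice point `q` has all `q i ≥ 1`. Since `∑ j < d, 1 / s j = 1 - 1 / P`
and every `1 / s j ≥ 1 / P`, raising one of the first `d - 1` coordinates above `1` already gives
`∑ i, q i / a i ≥ 1`; so they all equal `1`, and then the last coordinate is one of `1, …, k`.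
-/

def cornerSimplex {ι : Type*} [Fintype ι] (a : ι → ℝ) : Set (ι → ℝ) :=
  {x | (∀ i, 0 ≤ x i) ∧ ∑ i, x i / a i ≤ 1}

section cornerSimplex

variable {ι : Type*} [Fintype ι]

theorem convex_cornerSimplex (a : ι → ℝ) : Convex ℝ (cornerSimplex a) := by
  rintro x ⟨hx0, hx1⟩ y ⟨hy0, hy1⟩ α β hα hβ hαβ
  refine ⟨fun i => add_nonneg (mul_nonneg hα (hx0 i)) (mul_nonneg hβ (hy0 i)), ?_⟩
  calc ∑ i, (α • x + β • y) i / a i = α * ∑ i, x i / a i + β * ∑ i, y i / a i := by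
        simp only [Pi.add_apply, Pi.smul_apply, smul_eq_mul, add_div, mul_div_assoc,
          Finset.sum_add_distrib, Finset.mul_sum]
    _ ≤ α * 1 + β * 1 := by gcongr
    _ = 1 := by rw [mul_one, mul_one, hαβ]

theorem convexHull_insert_zero_range_single [DecidableEq ι] {a : ι → ℝ} (ha : ∀ i, 0 < a i) :
    convexHull ℝ (insert 0 (range fun i => Pi.single i (a i))) = cornerSimplex a := by
  refine Subset.antisymm (convexHull_min ?_ (convex_cornerSimplex a)) ?_
  · rintro _ (rfl | ⟨i, rfl⟩)
    · exact ⟨fun _ => le_rfl, by simp⟩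
    · refine ⟨fun j => ?_, ?_⟩
      · rcases eq_or_ne j i with rfl | h
        · simpa using (ha j).le
        · simp [h]
      · simp [Pi.single_apply, ite_div, (ha i).ne']
  · rintro x ⟨hx0, hx1⟩
    -- weights `x i / a i` on the vertices `a i • e i` and `1 - ∑ i, x i / a i` on `0`
    have hmem := (convex_convexHull ℝ (insert 0 (range fun i => Pi.single i (a i)))).sum_mem
      (t := Finset.univ) (w := fun o : Option ι => o.elim (1 - ∑ i, x i / a i) fun i => x i / a i)
      (z := fun o => o.elim 0 fun i => Pi.single i (a i))
      (fun o _ => o.rec (by simpa using hx1) fun i => div_nonneg (hx0 i) (ha i).le)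
      (by simp [Fintype.sum_option])
      (fun o _ => o.rec (subset_convexHull ℝ _ (mem_insert _ _))
        fun i => subset_convexHull ℝ _ (mem_insert_of_mem _ ⟨i, rfl⟩))
    convert hmem
    simp only [Fintype.sum_option, Option.elim, smul_zero, zero_add, ← Pi.single_smul',
      smul_eq_mul, div_mul_cancel₀ _ (ha _).ne', Finset.univ_sum_single]

theorem interior_cornerSimplex [Nonempty ι] {a : ι → ℝ} (ha : ∀ i, 0 < a i) :
    interior (cornerSimplex a) = {x | (∀ i, 0 < x i) ∧ ∑ i, x i / a i < 1} := by
  classical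
  let ℓ : (ι → ℝ) →ₗ[ℝ] ℝ := ∑ i, (a i)⁻¹ • LinearMap.proj i
  have hℓ (x : ι → ℝ) : ℓ x = ∑ i, x i / a i := by simp [ℓ, div_eq_inv_mul]
  have hℓsurj : Function.Surjective ℓ := fun t => by
    obtain ⟨i⟩ := ‹Nonempty ι›
    exact ⟨Pi.single i (t * a i), by simp [hℓ, Pi.single_apply, ite_div, (ha i).ne']⟩
  have hsimplex : cornerSimplex a = (⋂ i, Function.eval i ⁻¹' Ici 0) ∩ ℓ ⁻¹' Iic 1 := by
    ext x; simp [cornerSimplex, hℓ]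
  simp_rw [hsimplex, interior_inter, interior_iInter_of_finite,
    ← (isOpenMap_eval _).preimage_interior_eq_interior_preimage (continuous_apply _),
    ← (ℓ.isOpenMap_of_finiteDimensional hℓsurj).preimage_interior_eq_interior_preimage
      ℓ.continuous_of_finiteDimensional, interior_Ici, interior_Iic]
  ext x; simp [hℓ]

end cornerSimplex

theorem volume_setOf_nonneg_sum_le (n : ℕ) {c : ℝ} (hc : 0 ≤ c) :
    volume {x : Fin n → ℝ | (∀ i, 0 ≤ x i) ∧ ∑ i, x i ≤ c} =
      ENNReal.ofReal (c ^ n / n.factorial) := by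
  induction n generalizing c with
  | zero => simp [hc, volume_pi]
  | succ n ih =>
    let B : Set (ℝ × (Fin n → ℝ)) :=
      {p | 0 ≤ p.1 ∧ (∀ i, 0 ≤ p.2 i) ∧ ∑ i, p.2 i ≤ c - p.1}
    have hB : MeasurableSet B := by measurability
    have hpre : {x : Fin (n + 1) → ℝ | (∀ i, 0 ≤ x i) ∧ ∑ i, x i ≤ c} =
        MeasurableEquiv.piFinSuccAbove (fun _ => ℝ) 0 ⁻¹' B := by
      ext x
      simp [B, Fin.forall_fin_succ, Fin.sum_univ_succ, Fin.insertNthEquiv, Fin.tail,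
        le_sub_iff_add_le', and_assoc]
    have hslice (t : ℝ) : volume (Prod.mk t ⁻¹' B) =
        (Icc 0 c).indicator (fun t => ENNReal.ofReal ((c - t) ^ n / n.factorial)) t := by
      by_cases ht : t ∈ Icc 0 c
      · rw [indicator_of_mem ht, ← ih (sub_nonneg.2 ht.2)]
        congr 1
        ext y
        simp [B, ht.1]
      · rw [indicator_of_notMem ht, ← measure_empty (μ := (volume : Measure (Fin n → ℝ)))]
        refine congrArg _ (eq_empty_of_forall_notMem fun y ⟨ht0, hy0, hy⟩ => ht ⟨ht0, ?_⟩)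
        linarith [Finset.sum_nonneg fun i (_ : i ∈ Finset.univ) => hy0 i]
    have hint : ∫ t in Icc 0 c, (c - t) ^ n / n.factorial = c ^ (n + 1) / (n + 1).factorial := by
      rw [integral_Icc_eq_integral_Ioc, ← intervalIntegral.integral_of_le hc,
        intervalIntegral.integral_div, intervalIntegral.integral_comp_sub_left (· ^ n) c,
        sub_self, sub_zero, integral_pow, zero_pow n.succ_ne_zero, sub_zero, Nat.factorial_succ]
      push_cast
      field_simp
    rw [hpre, (volume_preserving_piFinSuccAbove (fun _ => ℝ) 0).measure_preimage
      hB.nullMeasurableSet, Measure.volume_eq_prod, Measure.prod_apply hB]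
    simp_rw [hslice]
    rw [lintegral_indicator measurableSet_Icc, ← hint, ofReal_integral_eq_lintegral_ofReal]
    · exact (by fun_prop : Continuous fun t : ℝ => (c - t) ^ n / n.factorial).integrableOn_Icc
    · exact ae_restrict_of_forall_mem measurableSet_Icc fun t ht => by
        have := sub_nonneg.2 ht.2
        positivity

theorem volume_cornerSimplex {d : ℕ} {a : Fin d → ℝ} (ha : ∀ i, 0 < a i) :
    volume (cornerSimplex a) = ENNReal.ofReal ((∏ i, a i) / d.factorial) := by
  let f := Matrix.toLin' (Matrix.diagonal a)
  have hf (x : Fin d → ℝ) (i : Fin d) : f x i = a i * x i := by simp [f, Matrix.mulVec_diagonal]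
  have himage : f '' {x | (∀ i, 0 ≤ x i) ∧ ∑ i, x i ≤ 1} = cornerSimplex a := by
    ext y
    refine ⟨?_, fun ⟨hy0, hy1⟩ =>
      ⟨fun i => y i / a i, ⟨fun i => div_nonneg (hy0 i) (ha i).le, hy1⟩, ?_⟩⟩
    · rintro ⟨x, ⟨hx0, hx1⟩, rfl⟩
      refine ⟨fun i => by rw [hf]; exact mul_nonneg (ha i).le (hx0 i), ?_⟩
      simpa [hf, mul_div_cancel_left₀ _ (ha _).ne'] using hx1
    · ext i; rw [hf, mul_div_cancel₀ _ (ha i).ne']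
  have hprod : 0 < ∏ i, a i := Finset.prod_pos fun i _ => ha i
  rw [← himage, Measure.addHaar_image_linearMap, volume_setOf_nonneg_sum_le d zero_le_one,
    LinearMap.det_toLin', Matrix.det_diagonal, abs_of_pos hprod, ← ENNReal.ofReal_mul hprod.le,
    one_pow, mul_one_div]

theorem sylvester_succ_eq_prod_range {s : ℕ → ℕ} (hs1 : s 1 = 2)
    (hs : ∀ i, 2 ≤ i → s i = (∏ j ∈ Finset.Icc 1 (i - 1), s j) + 1) (n : ℕ) :
    s (n + 1) = ∏ j ∈ Finset.range n, s (j + 1) + 1 := by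
  rcases n with _ | n
  · simp [hs1]
  · rw [hs (n + 2) (by omega), ← Finset.Ico_add_one_right_eq_Icc, Finset.prod_Ico_eq_prod_range]
    simp [add_comm]

section sylvester

variable {s : ℕ → ℕ} (hs : ∀ n, s (n + 1) = ∏ j ∈ Finset.range n, s (j + 1) + 1)
include hs

theorem one_le_sylvester (n : ℕ) : 1 ≤ s (n + 1) := by
  rw [hs]; exact Nat.le_add_left 1 _

theorem sylvester_le_prod_range {n j : ℕ} (hj : j < n) :
    s (j + 1) ≤ ∏ i ∈ Finset.range n, s (i + 1) :=
  Finset.single_le_prod' (fun i _ => one_le_sylvester hs i) (Finset.mem_range.2 hj)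

theorem sum_range_one_div_sylvester (n : ℕ) :
    ∑ j ∈ Finset.range n, (1 : ℝ) / s (j + 1) = 1 - 1 / ∏ j ∈ Finset.range n, (s (j + 1) : ℝ) := by
  induction n with
  | zero => simp
  | succ n ih =>
    have hP : (0 : ℝ) < ∏ j ∈ Finset.range n, (s (j + 1) : ℝ) :=
      Finset.prod_pos fun j _ => by exact_mod_cast one_le_sylvester hs j
    rw [Finset.sum_range_succ, Finset.prod_range_succ, ih, hs n]
    push_cast
    field_simp
    ring

end sylvester

theorem sum_div_add_div_lt_one_iff {n k : ℕ} {b : Fin n → ℝ} {P : ℝ} (hP : 0 < P)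
    (hb : ∀ i, 0 < b i) (hbP : ∀ i, b i ≤ P) (hsum : ∑ i, 1 / b i = 1 - 1 / P)
    {q : Fin n → ℤ} {m : ℤ} (hq : ∀ i, 0 < q i) (hm : 0 < m) :
    ∑ i, (q i : ℝ) / b i + m / ((k + 1) * P) < 1 ↔ (∀ i, q i = 1) ∧ m ≤ k := by
  have hlast : 1 - 1 / P + m / ((k + 1) * P) < 1 ↔ m ≤ k := by
    have hkP : (0 : ℝ) < (k + 1) * P := by positivity
    rw [← Int.lt_add_one_iff, ← @Int.cast_lt ℝ,
      show 1 - 1 / P + m / ((k + 1) * P) = 1 + (m - (k + 1)) / ((k + 1) * P) by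
        field_simp; ring,
      add_lt_iff_neg_left, div_lt_iff₀ hkP, zero_mul, sub_neg]
    push_cast; rfl
  have hones (hq1 : ∀ i, q i = 1) : ∑ i, (q i : ℝ) / b i = 1 - 1 / P := by simpa [hq1] using hsum
  refine ⟨fun h => ?_, fun ⟨hq1, hmk⟩ => hones hq1 ▸ hlast.2 hmk⟩
  have hq1 : ∀ i, q i = 1 := by
    by_contra! ⟨j, hj⟩
    have hqj : (2 : ℝ) ≤ q j := by exact_mod_cast (show 2 ≤ q j by have := hq j; omega)
    have hexcess : ∀ i, 0 ≤ ((q i : ℝ) - 1) / b i := fun i =>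
      div_nonneg (sub_nonneg.2 (by exact_mod_cast hq i)) (hb i).le
    have : 1 ≤ ∑ i, (q i : ℝ) / b i :=
      calc 1 = ∑ i, 1 / b i + 1 / P := by rw [hsum]; ring
        _ ≤ ∑ i, 1 / b i + ((q j : ℝ) - 1) / b j := by
          refine (add_le_add_iff_left _).2 ?_
          calc 1 / P ≤ 1 / b j := one_div_le_one_div_of_le (hb j) (hbP j)
            _ ≤ ((q j : ℝ) - 1) / b j := by gcongr; exacts [(hb j).le, by linarith]
        _ ≤ ∑ i, 1 / b i + ∑ i, ((q i : ℝ) - 1) / b i := by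
          gcongr
          exact Finset.single_le_sum (fun i _ => hexcess i) (Finset.mem_univ j)
        _ = ∑ i, (q i : ℝ) / b i := by
          rw [← Finset.sum_add_distrib]
          exact Finset.sum_congr rfl fun i _ => by ring
    have : 0 < m / ((k + 1) * P) := by positivity
    linarith
  exact ⟨hq1, hlast.1 (hones hq1 ▸ h)⟩

theorem ncard_int_pos_sum_div_snoc_lt_one {n k : ℕ} {b : Fin n → ℝ} {P : ℝ} (hP : 0 < P)
    (hb : ∀ i, 0 < b i) (hbP : ∀ i, b i ≤ P) (hsum : ∑ i, 1 / b i = 1 - 1 / P) :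
    {q : Fin (n + 1) → ℤ | (∀ i, (0 : ℝ) < q i) ∧
      ∑ i, (q i : ℝ) / Fin.snoc (α := fun _ => ℝ) b ((k + 1) * P) i < 1}.ncard = k := by
  have hpoints : {q : Fin (n + 1) → ℤ | (∀ i, (0 : ℝ) < q i) ∧
      ∑ i, (q i : ℝ) / Fin.snoc (α := fun _ => ℝ) b ((k + 1) * P) i < 1} =
      Fin.snoc (α := fun _ => ℤ) 1 '' Icc 1 (k : ℤ) := by
    ext p
    obtain ⟨q, m, rfl⟩ : ∃ (q : Fin n → ℤ) (m : ℤ), p = Fin.snoc q m :=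
      ⟨Fin.init p, p (Fin.last n), (Fin.snoc_init_self p).symm⟩
    simp only [mem_ofPred_eq, Fin.forall_fin_succ', Fin.sum_univ_castSucc, Fin.snoc_castSucc,
      Fin.snoc_last, Int.cast_pos, mem_image, Fin.snoc_inj, mem_Icc]
    constructor
    · rintro ⟨⟨hq, hm⟩, h⟩
      obtain ⟨hq1, hmk⟩ := (sum_div_add_div_lt_one_iff hP hb hbP hsum hq hm).1 h
      exact ⟨m, ⟨hm, hmk⟩, (funext hq1).symm, rfl⟩
    · rintro ⟨m, ⟨hm, hmk⟩, rfl, rfl⟩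
      have hq : ∀ i : Fin n, 0 < (1 : Fin n → ℤ) i := fun _ => one_pos
      exact ⟨⟨hq, hm⟩, (sum_div_add_div_lt_one_iff hP hb hbP hsum hq hm).2 ⟨fun _ => rfl, hmk⟩⟩
  rw [hpoints, ncard_image_of_injective _ (Fin.snoc_right_injective _), ← Finset.coe_Icc,
    ncard_coe_finset, Int.card_Icc]
  omega

/-- For `d ≥ 2` and `k ≥ 0`, the simplex
`S^d_k = conv({0, s 1 • e 1, …, s (d-1) • e (d-1), (k+1)(s d - 1) • e d}) ⊂ ℝ^d`
contains exactly `k` integer points in its interior, and its volume is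
`(k+1)(s d - 1)² / d!`, where `s` is the Sylvester sequence. -/
theorem simplex_Sdk_interior_points_and_volume (d k : ℕ) (hd : 2 ≤ d)
    (s : ℕ → ℕ) (hs1 : s 1 = 2)
    (hs : ∀ i, 2 ≤ i → s i = (∏ j ∈ Finset.Icc 1 (i - 1), s j) + 1)
    (S : Set (Fin d → ℝ))
    (hS : S = convexHull ℝ (insert (0 : Fin d → ℝ)
      (Set.range (fun i : Fin d => fun j =>
        if j = i then
          (if (i : ℕ) < d - 1 then (s ((i : ℕ) + 1) : ℝ)
            else ((k : ℝ) + 1) * ((s d : ℝ) - 1))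
        else 0)))) :
    {q : Fin d → ℤ | (fun j => (q j : ℝ)) ∈ interior S}.ncard = k ∧
    (volume S).toReal = ((k : ℝ) + 1) * ((s d : ℝ) - 1) ^ 2 / (d.factorial : ℝ) := by
  obtain ⟨n, rfl⟩ : ∃ n, d = n + 1 := ⟨d - 1, by omega⟩
  have hrec := sylvester_succ_eq_prod_range hs1 hs
  set P : ℝ := ∏ j ∈ Finset.range n, (s (j + 1) : ℝ)
  have hsP : (s (n + 1) : ℝ) - 1 = P := by rw [hrec]; push_cast; ring
  let b : Fin n → ℝ := fun i => s (i + 1)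
  have hb (i : Fin n) : 0 < b i := Nat.cast_pos.2 <| one_le_sylvester hrec i
  have hbP (i : Fin n) : b i ≤ P := by
    simp only [b, P, ← Nat.cast_prod]; exact_mod_cast sylvester_le_prod_range hrec i.isLt
  have hsum : ∑ i, 1 / b i = 1 - 1 / P := by
    rw [← sum_range_one_div_sylvester hrec,
      Fin.sum_univ_eq_sum_range (fun j => 1 / (s (j + 1) : ℝ))]
  have hP : 0 < P := Finset.prod_pos fun j _ => by exact_mod_cast one_le_sylvester hrec j
  set a : Fin (n + 1) → ℝ := Fin.snoc b ((k + 1) * P)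
  have ha : ∀ i, 0 < a i := Fin.lastCases (by simp only [a, Fin.snoc_last]; positivity)
    fun i => by simpa [a] using hb i
  have hSa : S = cornerSimplex a := by
    rw [hS, ← convexHull_insert_zero_range_single ha]
    congr; funext i j
    induction i using Fin.lastCases <;> simp [a, b, Pi.single_apply, hsP]
  rw [hSa, interior_cornerSimplex ha]
  refine ⟨ncard_int_pos_sum_div_snoc_lt_one hP hb hbP hsum, ?_⟩
  rw [volume_cornerSimplex ha, ENNReal.toReal_ofReal
    (div_nonneg (Finset.prod_pos fun i _ => ha i).le (Nat.cast_nonneg _)), Fin.prod_univ_castSucc]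
  simp only [a, b, Fin.snoc_castSucc, Fin.snoc_last,
    Fin.prod_univ_eq_prod_range (fun j => (s (j + 1) : ℝ)), hsP]
  ring
end
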